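/- arXiv:2101.10543 — 5 statements merged into one kernel-verified Lean document; each statement's English description precedes it below -/
import Mathlib

section
/- Let n be a positive integer with n ≡ 3 (mod 4) and let d' = (3^(n+1) - 1)/8 + (3^n - 1)/2. Then the power function F'(x) = x^{d'} on GF(3^n) has (-1)-differential uniformity at most 2; that is, for all a, b ∈ GF(3^n), the number of x ∈ GF(3^n) satisfying (x+a)^{d'} + x^{d'} = b is at most 2. -/
/-!
Write `q = 3ⁿ` and `χ` for the quadratic character. Since `q ≡ 11 (mod 16)`, `d · (q + 7)/2 ≡ 1
(mod q - 1)`, so `x ↦ x ^ d` is a bijection with inverse `G y = y ^ ((q + 7)/2) = χ(y) y⁴`.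
Putting `y = x ^ d` and `z = (x + a) ^ d` turns the equation into `y + z = b`, `G z - G y = a`, and
it suffices to show that there is at most one solution with `χ(yz) = -1` ("mixed") and at most one
with `χ(yz) ≠ -1`. For a mixed solution, `p = yz` is a nonsquare with `p² + b²p = b⁴ ∓ a` and
`b² - p = (y - z)²` (characteristic 3); otherwise `G z - G y = ±((b - y)⁴ - y⁴)`, and
`w ↦ (b - w)⁴ - w⁴` is injective for `b ≠ 0`. Every remaining coincidence is excluded because `-1`
is not a square (`q ≡ 3 (mod 4)`), so that `u² + v² = 0` forces `u = 0`.
-/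

instance : Fact (Nat.Prime 3) := ⟨by norm_num⟩

theorem eq_zero_of_sq_add_sq_eq_zero {K : Type*} [Field K] (hK : ¬IsSquare (-1 : K)) {u v : K}
    (h : u ^ 2 + v ^ 2 = 0) : u = 0 := by
  by_contra hu
  exact hK ⟨v / u, by field_simp; linear_combination -h⟩

theorem pow_mul_card_sub_one_add_one {K : Type*} [Field K] [Fintype K] (x : K) (m : ℕ) :
    x ^ (m * (Fintype.card K - 1) + 1) = x := by
  rcases eq_or_ne x 0 with rfl | hx
  · simp
  · rw [pow_succ, pow_mul', FiniteField.pow_card_sub_one_eq_one x hx, one_pow, one_mul]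

theorem three_pow_mod_sixteen {n : ℕ} (hn : n % 4 = 3) : 3 ^ n % 16 = 11 := by
  rw [← Nat.div_add_mod n 4, hn, pow_add, pow_mul, Nat.mul_mod, Nat.pow_mod]
  norm_num

theorem mul_div_two_add_four_eq_of_mod_sixteen {q d : ℕ} (hq : q % 16 = 11)
    (hd : d = (q * 3 - 1) / 8 + (q - 1) / 2) :
    d * (q / 2 + 4) = (7 * (q / 16) + 8) * (q - 1) + 1 := by
  obtain ⟨k, rfl⟩ : ∃ k, q = 16 * k + 11 := ⟨q / 16, by omega⟩
  rw [show d = 14 * k + 9 by omega, show (16 * k + 11) / 2 + 4 = 8 * k + 9 by omega,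
    show (16 * k + 11) / 16 = k by omega, show 16 * k + 11 - 1 = 16 * k + 10 by omega]
  ring

theorem exists_sign_of_mul_ne_neg_one {s t : ℤ} (hs : s = 0 ∨ s = 1 ∨ s = -1)
    (ht : t = 0 ∨ t = 1 ∨ t = -1) (h : s * t ≠ -1) :
    ∃ σ : ℤ, (σ = 1 ∨ σ = -1) ∧ s ≠ -σ ∧ t ≠ -σ := by
  rcases hs with rfl | rfl | rfl <;> rcases ht with rfl | rfl | rfl <;>
    first | exact ⟨1, by decide⟩ | exact ⟨-1, by decide⟩ | exact absurd rfl h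

theorem injective_fourth_pow_sub {K : Type*} [Field K] [CharP K 3] (hK : ¬IsSquare (-1 : K))
    {b : K} (hb : b ≠ 0) :
    Function.Injective fun w : K => (b - w) ^ 4 - w ^ 4 := by
  have h3 : (3 : K) = 0 := CharP.ofNat_eq_zero K 3
  intro w₁ w₂ h
  have hfactor : b * (w₁ - w₂) * (b ^ 2 + (w₁ - w₂) ^ 2) = 0 := by
    linear_combination (-1 : K) * h + (-b ^ 3 * (w₁ - w₂) + 2 * b ^ 2 * (w₁ ^ 2 - w₂ ^ 2) -
      b * (w₁ ^ 3 - w₂ ^ 3) - b * w₁ ^ 2 * w₂ + b * w₁ * w₂ ^ 2) * h3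
  rcases mul_eq_zero.mp hfactor with h' | h'
  · exact sub_eq_zero.mp ((mul_eq_zero.mp h').resolve_left hb)
  · exact absurd (eq_zero_of_sq_add_sq_eq_zero hK h') hb

section TwistedQuartic

variable {K : Type*} [Field K] [Fintype K] [DecidableEq K]

variable (K) in
def twistedQuartic (y : K) : K :=
  quadraticChar K y * y ^ 4

variable (K) in
def twistedQuarticSolutions (a b : K) : Set K :=
  {y | twistedQuartic K (b - y) - twistedQuartic K y = a}

theorem mem_twistedQuarticSolutions {a b y : K} :
    y ∈ twistedQuarticSolutions K a b ↔ twistedQuartic K (b - y) - twistedQuartic K y = a :=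
  Iff.rfl

theorem twistedQuartic_pow_eq_self (hF : ringChar K ≠ 2) {d m : ℕ}
    (hd : d * (Fintype.card K / 2 + 4) = m * (Fintype.card K - 1) + 1) (x : K) :
    twistedQuartic K (x ^ d) = x := by
  rw [twistedQuartic, quadraticChar_eq_pow_of_char_ne_two' hF, ← pow_add, ← pow_mul, hd,
    pow_mul_card_sub_one_add_one]

theorem twistedQuartic_eq_of_quadraticChar_ne_neg {y : K} {σ : ℤ} (hσ : σ = 1 ∨ σ = -1)
    (hy : quadraticChar K y ≠ -σ) : twistedQuartic K y = σ * y ^ 4 := by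
  rcases eq_or_ne y 0 with rfl | hy0
  · simp [twistedQuartic]
  · have : quadraticChar K y = σ := by
      rcases quadraticChar_dichotomy hy0 with h | h <;> omega
    rw [twistedQuartic, this]

theorem eq_zero_of_quadraticChar_ne {y : K} {σ : ℤ} (hσ : σ = 1 ∨ σ = -1)
    (h₁ : quadraticChar K y ≠ σ) (h₂ : quadraticChar K y ≠ -σ) : y = 0 := by
  rw [← quadraticChar_eq_zero_iff (F := K)]
  rcases quadraticChar_isQuadratic K y with h | h | h <;> omega

end TwistedQuartic

section CharThree

variable {K : Type*} [Field K] [Fintype K] [DecidableEq K] [CharP K 3]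

theorem mixed_product_relation {b y : K} (hy : quadraticChar K (y * (b - y)) = -1) :
    ∃ t : ℤ, (t = 1 ∨ t = -1) ∧ quadraticChar K y = -t ∧ quadraticChar K (b - y) = t ∧
      (y * (b - y)) ^ 2 + b ^ 2 * (y * (b - y)) =
        b ^ 4 - t * (twistedQuartic K (b - y) - twistedQuartic K y) := by
  have h3 : (3 : K) = 0 := CharP.ofNat_eq_zero K 3
  rw [map_mul] at hy
  have hz : b - y ≠ 0 := fun h => by simp [h] at hy
  obtain ⟨t, hzt⟩ : ∃ t, quadraticChar K (b - y) = t := ⟨_, rfl⟩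
  have ht : t = 1 ∨ t = -1 := hzt ▸ quadraticChar_dichotomy hz
  have hyt : quadraticChar K y = -t := by rcases ht with h | h <;> rw [hzt, h] at hy <;> linarith
  have ht2 : (t : K) ^ 2 = 1 := by
    have h := quadraticChar_sq_one hz
    rw [hzt] at h
    rw [← Int.cast_pow, h, Int.cast_one]
  refine ⟨t, ht, hyt, hzt, ?_⟩
  rw [twistedQuartic, twistedQuartic, hyt, hzt]
  push_cast
  linear_combination ((b - y) ^ 4 + y ^ 4) * ht2 -
    y * (b - y) * (y ^ 2 + y * (b - y) + (b - y) ^ 2) * h3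

theorem mixed_eq_of_sign_eq (hK : ¬IsSquare (-1 : K)) {b y₁ y₂ : K} {t : ℤ} (ht : t ≠ 0)
    (hm : quadraticChar K (y₁ * (b - y₁)) = -1) (hy₁ : quadraticChar K y₁ = -t)
    (hz₂ : quadraticChar K (b - y₂) = t)
    (h : (y₁ * (b - y₁)) ^ 2 + b ^ 2 * (y₁ * (b - y₁)) =
      (y₂ * (b - y₂)) ^ 2 + b ^ 2 * (y₂ * (b - y₂))) : y₁ = y₂ := by
  have h3 : (3 : K) = 0 := CharP.ofNat_eq_zero K 3
  have hfactor :
      (y₁ * (b - y₁) - y₂ * (b - y₂)) * (y₁ * (b - y₁) + y₂ * (b - y₂) + b ^ 2) = 0 := by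
    linear_combination h
  rcases mul_eq_zero.mp hfactor with hp | hp
  · have hroots : (y₁ - y₂) * (y₁ - (b - y₂)) = 0 := by linear_combination -hp
    rcases mul_eq_zero.mp hroots with hy | hy
    · exact sub_eq_zero.mp hy
    · rw [sub_eq_zero.mp hy, hz₂] at hy₁
      omega
  · -- In characteristic 3, `b² - yz = (y - z)²` when `y + z = b`.
    have hsq : (y₁ - (b - y₁)) ^ 2 + (y₂ - (b - y₂)) ^ 2 = 0 := by
      linear_combination (-4) * hp + 2 * b ^ 2 * h3
    have hy₁z : b - y₁ = y₁ := (sub_eq_zero.mp (eq_zero_of_sq_add_sq_eq_zero hK hsq)).symm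
    have hy₁0 : y₁ ≠ 0 := fun h0 => by simp [h0] at hm
    rw [hy₁z, ← sq, quadraticChar_sq_one' hy₁0] at hm
    norm_num at hm

theorem mixed_relations_add_ne (hK : ¬IsSquare (-1 : K)) {b p₁ p₂ : K}
    (hp₁ : quadraticChar K p₁ = -1) (hp₂ : quadraticChar K p₂ = -1) :
    p₁ ^ 2 + b ^ 2 * p₁ + (p₂ ^ 2 + b ^ 2 * p₂) ≠ 2 * b ^ 4 := by
  intro h
  have h3 : (3 : K) = 0 := CharP.ofNat_eq_zero K 3
  have hp0 : p₁ * p₂ ≠ 0 :=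
    mul_ne_zero (fun h0 => by simp [h0] at hp₁) (fun h0 => by simp [h0] at hp₂)
  obtain ⟨r, hr⟩ := (quadraticChar_one_iff_isSquare hp0).mp (by rw [map_mul, hp₁, hp₂]; rfl)
  have hsq : r ^ 2 + (p₁ + p₂ - b ^ 2) ^ 2 = 0 := by
    linear_combination h - hr + (b ^ 4 + p₁ * p₂ - b ^ 2 * p₁ - b ^ 2 * p₂) * h3
  exact hp0 (by rw [hr, eq_zero_of_sq_add_sq_eq_zero hK hsq, mul_zero])

theorem mixed_solutions_subsingleton (hK : ¬IsSquare (-1 : K)) (a b : K) :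
    {y ∈ twistedQuarticSolutions K a b | quadraticChar K (y * (b - y)) = -1}.Subsingleton := by
  rintro y₁ ⟨h₁, hm₁⟩ y₂ ⟨h₂, hm₂⟩
  rw [mem_twistedQuarticSolutions] at h₁ h₂
  obtain ⟨t₁, ht₁, hy₁, -, hp₁⟩ := mixed_product_relation hm₁
  obtain ⟨t₂, ht₂, -, hz₂, hp₂⟩ := mixed_product_relation hm₂
  rw [h₁] at hp₁
  rw [h₂] at hp₂
  rcases ht₁ with rfl | rfl <;> rcases ht₂ with rfl | rfl <;> push_cast at hp₁ hp₂
  · exact mixed_eq_of_sign_eq hK one_ne_zero hm₁ hy₁ hz₂ (hp₁.trans hp₂.symm)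
  · exact (mixed_relations_add_ne hK (b := b) hm₁ hm₂ (by linear_combination hp₁ + hp₂)).elim
  · exact (mixed_relations_add_ne hK (b := b) hm₁ hm₂ (by linear_combination hp₁ + hp₂)).elim
  · exact mixed_eq_of_sign_eq hK (by decide) hm₁ hy₁ hz₂ (hp₁.trans hp₂.symm)

theorem nonmixed_solutions_subsingleton (hK : ¬IsSquare (-1 : K)) (a b : K) :
    {y ∈ twistedQuarticSolutions K a b | quadraticChar K (y * (b - y)) ≠ -1}.Subsingleton := by
  rintro y₁ ⟨h₁, hm₁⟩ y₂ ⟨h₂, hm₂⟩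
  rw [mem_twistedQuarticSolutions] at h₁ h₂
  rw [map_mul] at hm₁ hm₂
  obtain ⟨σ₁, hσ₁, hy₁, hz₁⟩ := exists_sign_of_mul_ne_neg_one
    (quadraticChar_isQuadratic K y₁) (quadraticChar_isQuadratic K (b - y₁)) hm₁
  obtain ⟨σ₂, hσ₂, hy₂, hz₂⟩ := exists_sign_of_mul_ne_neg_one
    (quadraticChar_isQuadratic K y₂) (quadraticChar_isQuadratic K (b - y₂)) hm₂
  rcases eq_or_ne b 0 with rfl | hb
  · have hneg : ∀ y : K, quadraticChar K (0 - y) = -quadraticChar K y := fun y => by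
      rw [zero_sub, neg_eq_neg_one_mul, map_mul, quadraticChar_neg_one_iff_not_isSquare.mpr hK,
        neg_one_mul]
    rw [hneg] at hz₁ hz₂
    rw [eq_zero_of_quadraticChar_ne hσ₁ (by omega) hy₁,
      eq_zero_of_quadraticChar_ne hσ₂ (by omega) hy₂]
  have of_swap (hy : y₁ = b - y₂) (hσ : σ₂ = -σ₁) : y₁ = y₂ := by
    subst hy hσ
    rw [sub_sub_cancel] at hz₁
    rw [eq_zero_of_quadraticChar_ne hσ₁ (by omega) hy₁,
      eq_zero_of_quadraticChar_ne hσ₂ (by omega) hy₂]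
  rw [twistedQuartic_eq_of_quadraticChar_ne_neg hσ₁ hz₁,
    twistedQuartic_eq_of_quadraticChar_ne_neg hσ₁ hy₁] at h₁
  rw [twistedQuartic_eq_of_quadraticChar_ne_neg hσ₂ hz₂,
    twistedQuartic_eq_of_quadraticChar_ne_neg hσ₂ hy₂] at h₂
  rcases hσ₁ with rfl | rfl <;> rcases hσ₂ with rfl | rfl <;> push_cast at h₁ h₂
  · exact injective_fourth_pow_sub hK hb (by linear_combination h₁ - h₂)
  · exact of_swap (injective_fourth_pow_sub hK hb (by linear_combination h₁ - h₂)) rfl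
  · exact of_swap (injective_fourth_pow_sub hK hb (by linear_combination h₂ - h₁)) (neg_neg 1).symm
  · exact injective_fourth_pow_sub hK hb (by linear_combination h₂ - h₁)

theorem ncard_twistedQuarticSolutions_le_two (hK : ¬IsSquare (-1 : K)) (a b : K) :
    (twistedQuarticSolutions K a b).ncard ≤ 2 := by
  have hsplit : twistedQuarticSolutions K a b ⊆
      {y ∈ twistedQuarticSolutions K a b | quadraticChar K (y * (b - y)) = -1} ∪
        {y ∈ twistedQuarticSolutions K a b | quadraticChar K (y * (b - y)) ≠ -1} :=
    fun y hy => (em _).imp (⟨hy, ·⟩) (⟨hy, ·⟩)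
  calc _ ≤ _ := Set.ncard_le_ncard hsplit
    _ ≤ _ := Set.ncard_union_le _ _
    _ ≤ 1 + 1 := add_le_add
        (Set.ncard_le_one_iff_subsingleton.mpr (mixed_solutions_subsingleton hK a b))
        (Set.ncard_le_one_iff_subsingleton.mpr (nonmixed_solutions_subsingleton hK a b))

end CharThree

theorem stmt_6_general (n : ℕ) (hcond : n % 4 = 3)
    (d : ℕ) (hd : d = (3 ^ (n + 1) - 1) / 8 + (3 ^ n - 1) / 2) :
    ∀ a b : GaloisField 3 n,
      {x : GaloisField 3 n | (x + a) ^ d + x ^ d = b}.ncard ≤ 2 := by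
  classical
  intro a b
  let _ : Fintype (GaloisField 3 n) := Fintype.ofFinite _
  have hcard : Fintype.card (GaloisField 3 n) = 3 ^ n := by
    rw [← Nat.card_eq_fintype_card, GaloisField.card 3 n (by omega)]
  have h16 := three_pow_mod_sixteen hcond
  have hF : ringChar (GaloisField 3 n) ≠ 2 := by rw [ringChar.eq (GaloisField 3 n) 3]; decide
  have hK : ¬IsSquare (-1 : GaloisField 3 n) := by
    rw [FiniteField.isSquare_neg_one_iff, hcard]; omega
  have hinv := twistedQuartic_pow_eq_self hF <| hcard ▸
    mul_div_two_add_four_eq_of_mod_sixteen h16 (pow_succ 3 n ▸ hd)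
  calc _ = ((· ^ d) '' {x : GaloisField 3 n | (x + a) ^ d + x ^ d = b}).ncard :=
        (Set.ncard_image_of_injective _ (Function.LeftInverse.injective hinv)).symm
    _ ≤ (twistedQuarticSolutions _ a b).ncard := by
        refine Set.ncard_le_ncard ?_
        rintro _ ⟨x, hx, rfl⟩
        simp only [mem_twistedQuarticSolutions, ← eq_sub_of_add_eq hx, hinv, add_sub_cancel_left]
    _ ≤ 2 := ncard_twistedQuarticSolutions_le_two hK a b

theorem stmt_6 (n : ℕ) (hn : 0 < n) (hcond : n % 4 = 3)
    (d : ℕ) (hd : d = (3 ^ (n + 1) - 1) / 8 + (3 ^ n - 1) / 2) :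
    ∀ a b : GaloisField 3 n,
      {x : GaloisField 3 n | (x + a) ^ d + x ^ d = b}.ncard ≤ 2 :=
  stmt_6_general n hcond d hd
end

section
/- Let n be a positive integer with n ≡ 1 (mod 4) and let d' = (3^(n+1) - 1)/8 + (3^n - 1)/2. Then the power function F'(x) = x^{d'} on GF(3^n) has (-1)-differential uniformity at most 4; that is, for all a, b ∈ GF(3^n), the number of x ∈ GF(3^n) satisfying (x+a)^{d'} + x^{d'} = b is at most 4. -/
section Squares

variable {F : Type*} [Field F]

theorem eq_zero_of_isSquare_of_isSquare_neg (hF : ¬IsSquare (-1 : F)) {y : F}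
    (hy : IsSquare y) (hy' : IsSquare (-y)) : y = 0 := by
  obtain ⟨r, rfl⟩ := hy
  obtain ⟨s, hs⟩ := hy'
  rcases eq_or_ne r 0 with rfl | hr
  · simp
  exact absurd ⟨s / r, by field_simp; linear_combination hs⟩ hF

theorem eq_zero_of_sq_add_sq_eq_zero_s7 (hF : ¬IsSquare (-1 : F)) {p q : F}
    (h : p ^ 2 + q ^ 2 = 0) : p = 0 :=
  pow_eq_zero_iff two_ne_zero |>.mp <|
    eq_zero_of_isSquare_of_isSquare_neg hF (.sq p) ⟨q, by linear_combination -h⟩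

end Squares

section CharThree

variable {F : Type*} [Field F] [CharP F 3]

theorem sub_pow_four_sub_pow_four (b u : F) :
    (b - u) ^ 4 - u ^ 4 = b ^ 4 - b * (u ^ 3 + b ^ 2 * u) := by
  linear_combination (-b ^ 3 * u + 2 * b ^ 2 * u ^ 2 - b * u ^ 3) * CharP.ofNat_eq_zero F 3

theorem pow_four_add_sub_pow_four (b u : F) :
    u ^ 4 + (b - u) ^ 4 = b ^ 4 - b ^ 2 * (u * (b - u)) - (u * (b - u)) ^ 2 := by
  linear_combination (u ^ 4 - b ^ 3 * u + 2 * b ^ 2 * u ^ 2 - 2 * b * u ^ 3) *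
    CharP.ofNat_eq_zero F 3

theorem cube_add_sq_mul_injective (hF : ¬IsSquare (-1 : F)) {b : F} (hb : b ≠ 0) :
    Function.Injective fun u : F => u ^ 3 + b ^ 2 * u := by
  intro p q hpq
  have : (p - q) * ((p - q) ^ 2 + b ^ 2) = 0 := by
    linear_combination hpq + (p * q ^ 2 - p ^ 2 * q) * CharP.ofNat_eq_zero F 3
  rcases mul_eq_zero.mp this with h | h
  · exact sub_eq_zero.mp h
  · exact absurd (eq_zero_of_sq_add_sq_eq_zero_s7 hF (by rwa [add_comm] at h)) hb

theorem eq_zero_of_mul_sub_eq_zero_of_mul_sub_eq_sq (hF : ¬IsSquare (-1 : F)) {b u u' : F}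
    (hu : IsSquare u) (hv : IsSquare (b - u)) (hW : u * (b - u) = 0)
    (hW' : u' * (b - u') = b ^ 2) (hu' : IsSquare u') : b = 0 := by
  have hb : IsSquare b := by
    rcases mul_eq_zero.mp hW with h | h
    · rwa [h, sub_zero] at hv
    · rwa [sub_eq_zero.mp h]
  have hu'b : (u' + b) ^ 2 = 0 := by
    linear_combination -hW' + (b * u') * CharP.ofNat_eq_zero F 3
  rw [eq_neg_of_add_eq_zero_left (pow_eq_zero_iff two_ne_zero |>.mp hu'b)] at hu'
  exact eq_zero_of_isSquare_of_isSquare_neg hF hb hu'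

end CharThree

section QuarticRep

variable {F : Type*} [Field F]

/-- `x = ε u⁴` and `x + a = τ ε v⁴` with `ε = ±1` and squares `u`, `v` summing to `b`; for the
solutions `u = x ^ d`, `v = (x + a) ^ d`, and `τ = ±1` records whether the signs of `x` and
`x + a` agree. -/
def QuarticRep (a b τ x : F) : Prop :=
  ∃ u ε : F, ε ^ 2 = 1 ∧ IsSquare u ∧ IsSquare (b - u) ∧ x = ε * u ^ 4 ∧
    x + a = τ * ε * (b - u) ^ 4

variable {a b τ x x' : F}

theorem QuarticRep.eq_zero (hF : ¬IsSquare (-1 : F)) (hx : QuarticRep a 0 τ x) : x = 0 := by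
  obtain ⟨u, ε, -, hu, hv, rfl, -⟩ := hx
  rw [zero_sub] at hv
  simp [eq_zero_of_isSquare_of_isSquare_neg hF hu hv]

theorem QuarticRep.eq_or_eq_neg_sub_of_one [CharP F 3] (hF : ¬IsSquare (-1 : F))
    (hx : QuarticRep a b 1 x) (hx' : QuarticRep a b 1 x') : x' = x ∨ x' = -x - a := by
  rcases eq_or_ne b 0 with rfl | hb
  · exact .inl ((hx'.eq_zero hF).trans (hx.eq_zero hF).symm)
  have key {u ε : F} (hε : ε ^ 2 = 1) (h : ε * u ^ 4 + a = 1 * ε * (b - u) ^ 4) :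
      b * (u ^ 3 + b ^ 2 * u) = b ^ 4 - ε * a := by
    linear_combination ε * h + sub_pow_four_sub_pow_four b u + ((b - u) ^ 4 - u ^ 4) * hε
  have hφ := cube_add_sq_mul_injective hF hb
  obtain ⟨u, ε, hε, -, -, rfl, hxa⟩ := hx
  obtain ⟨u', ε', hε', -, -, rfl, hxa'⟩ := hx'
  rcases sq_eq_sq_iff_eq_or_eq_neg.mp (hε'.trans hε.symm) with rfl | rfl
  · refine .inl (congrArg (ε' * · ^ 4) (hφ (mul_left_cancel₀ hb ?_)))
    rw [key hε' hxa', key hε hxa]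
  · have : u' = b - u := hφ <| mul_left_cancel₀ hb <| by
      linear_combination key hε' hxa' + key hε hxa - sub_pow_four_sub_pow_four b u -
        sub_pow_four_sub_pow_four b (b - u)
    exact .inr (by rw [this]; linear_combination hxa)

theorem QuarticRep.eq_or_eq_neg_sub_of_neg_one [CharP F 3] (hF : ¬IsSquare (-1 : F))
    (hx : QuarticRep a b (-1) x) (hx' : QuarticRep a b (-1) x') : x' = x ∨ x' = -x - a := by
  rcases eq_or_ne b 0 with rfl | hb
  · exact .inl ((hx'.eq_zero hF).trans (hx.eq_zero hF).symm)
  have h3 : (3 : F) = 0 := CharP.ofNat_eq_zero F 3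
  have key {u ε : F} (hε : ε ^ 2 = 1) (h : ε * u ^ 4 + a = -1 * ε * (b - u) ^ 4) :
      ε * a = (u * (b - u)) ^ 2 + b ^ 2 * (u * (b - u)) - b ^ 4 := by
    linear_combination ε * h - pow_four_add_sub_pow_four b u - (u ^ 4 + (b - u) ^ 4) * hε
  obtain ⟨u, ε, hε, hu, hv, rfl, hxa⟩ := hx
  obtain ⟨u', ε', hε', hu', hv', rfl, hxa'⟩ := hx'
  rcases sq_eq_sq_iff_eq_or_eq_neg.mp (hε'.trans hε.symm) with rfl | rfl
  · have : (u' * (b - u') - u * (b - u)) * (u * (b - u) + u' * (b - u') + b ^ 2) = 0 := by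
      linear_combination key hε hxa - key hε' hxa'
    rcases mul_eq_zero.mp this with h | h
    · have : (u' - u) * (u' - (b - u)) = 0 := by linear_combination -h
      rcases mul_eq_zero.mp this with h | h
      · exact .inl (by rw [sub_eq_zero.mp h])
      · exact .inr (by rw [sub_eq_zero.mp h]; linear_combination hxa)
    · have hsq : (u + b) ^ 2 + (u' + b) ^ 2 = 0 := by
        linear_combination -h + (b ^ 2 + b * u + b * u') * h3
      have hsq' : (u' + b) ^ 2 + (u + b) ^ 2 = 0 := by rw [add_comm, hsq]
      have : u' = u := by
        linear_combination eq_zero_of_sq_add_sq_eq_zero_s7 hF hsq' -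
          eq_zero_of_sq_add_sq_eq_zero_s7 hF hsq
      exact .inl (by rw [this])
  · -- Opposite signs give `W W' = -(W + W' - b²)²` for the squares `W = u (b - u)` and
    -- `W' = u' (b - u')`; hence `W W' = 0` and `W + W' = b²`, which makes `b` and `-b` squares.
    refine absurd ?_ hb
    have hprod : u * (b - u) * (u' * (b - u')) =
        -(u * (b - u) + u' * (b - u') - b ^ 2) ^ 2 := by
      linear_combination -key hε hxa - key hε' hxa' +
        (u * (b - u) * (u' * (b - u')) + b ^ 4 - b ^ 2 * (u * (b - u) + u' * (b - u'))) * h3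
    have h0 := eq_zero_of_isSquare_of_isSquare_neg hF ((hu.mul hv).mul (hu'.mul hv'))
      ⟨_, by rw [hprod, neg_neg, sq]⟩
    have hsum : u * (b - u) + u' * (b - u') = b ^ 2 := by
      rw [h0, eq_comm, neg_eq_zero, pow_eq_zero_iff two_ne_zero, sub_eq_zero] at hprod
      exact hprod
    rcases mul_eq_zero.mp h0 with h | h
    · exact eq_zero_of_mul_sub_eq_zero_of_mul_sub_eq_sq hF hu hv h
        (by linear_combination hsum - h) hu'
    · exact eq_zero_of_mul_sub_eq_zero_of_mul_sub_eq_sq hF hu' hv' h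
        (by linear_combination hsum - h) hu

end QuarticRep

theorem Set.ncard_le_two_of_forall_eq_or_eq {α : Type*} {s : Set α} (σ : α → α)
    (h : ∀ x ∈ s, ∀ y ∈ s, y = x ∨ y = σ x) : s.ncard ≤ 2 := by
  rcases s.eq_empty_or_nonempty with rfl | ⟨x, hx⟩
  · simp
  calc s.ncard ≤ ({x, σ x} : Set α).ncard := Set.ncard_le_ncard fun y hy => h x hx y hy
    _ ≤ 2 := (Set.ncard_insert_le _ _).trans (by simp)

section Counting

variable {F : Type*} [Field F]

theorem setOf_add_eq_subset_quarticRep {P : F → F} (hPsq : ∀ x, IsSquare (P x))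
    (hP : ∀ x, ∃ ε : F, ε ^ 2 = 1 ∧ x = ε * P x ^ 4) (a b : F) :
    {x | P (x + a) + P x = b} ⊆ {x | QuarticRep a b 1 x} ∪ {x | QuarticRep a b (-1) x} := by
  intro x hx
  obtain ⟨ε, hε, hxε⟩ := hP x
  obtain ⟨δ, hδ, hxδ⟩ := hP (x + a)
  have hv : P (x + a) = b - P x := eq_sub_of_add_eq hx
  have hrep (τ : F) (hτ : δ = τ * ε) : QuarticRep a b τ x :=
    ⟨P x, ε, hε, hPsq x, hv ▸ hPsq (x + a), hxε, by rw [← hτ, ← hv]; exact hxδ⟩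
  rcases sq_eq_sq_iff_eq_or_eq_neg.mp (hδ.trans hε.symm) with h | h
  · exact .inl (hrep 1 (by rw [h, one_mul]))
  · exact .inr (hrep (-1) (by rw [h, neg_one_mul]))

theorem ncard_setOf_apply_add_add_apply_eq_le_four [Finite F] [CharP F 3]
    (hF : ¬IsSquare (-1 : F)) {P : F → F} (hPsq : ∀ x, IsSquare (P x))
    (hP : ∀ x, ∃ ε : F, ε ^ 2 = 1 ∧ x = ε * P x ^ 4) (a b : F) :
    {x | P (x + a) + P x = b}.ncard ≤ 4 :=
  calc {x | P (x + a) + P x = b}.ncard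
      ≤ ({x | QuarticRep a b 1 x} ∪ {x | QuarticRep a b (-1) x}).ncard :=
        Set.ncard_le_ncard (setOf_add_eq_subset_quarticRep hPsq hP a b)
    _ ≤ {x | QuarticRep a b 1 x}.ncard + {x | QuarticRep a b (-1) x}.ncard :=
        Set.ncard_union_le _ _
    _ ≤ 2 + 2 := add_le_add
        (Set.ncard_le_two_of_forall_eq_or_eq _ fun _ hx _ hy =>
          QuarticRep.eq_or_eq_neg_sub_of_one hF hx hy)
        (Set.ncard_le_two_of_forall_eq_or_eq _ fun _ hx _ hy =>
          QuarticRep.eq_or_eq_neg_sub_of_neg_one hF hx hy)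

theorem exists_sq_eq_one_and_eq_mul_pow_pow_four [Fintype F] {h d : ℕ}
    (hcard : Fintype.card F = 2 * h + 1) (hd : 4 * d ≡ h + 1 [MOD 2 * h]) (hd0 : d ≠ 0)
    (x : F) : ∃ ε : F, ε ^ 2 = 1 ∧ x = ε * (x ^ d) ^ 4 := by
  rcases eq_or_ne x 0 with rfl | hx
  · exact ⟨1, one_pow 2, by simp [hd0]⟩
  have h2h : x ^ (2 * h) = 1 := by
    simpa [hcard] using FiniteField.pow_card_sub_one_eq_one x hx
  refine ⟨x ^ h, by rw [← pow_mul, mul_comm, h2h], ?_⟩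
  rw [← pow_mul, mul_comm d, pow_eq_pow_mod (4 * d) h2h, hd, ← pow_eq_pow_mod (h + 1) h2h,
    ← pow_add, show h + (h + 1) = 2 * h + 1 by ring, pow_succ, h2h, one_mul]

end Counting

theorem stmt_7 (n : ℕ) (hn : 0 < n) (hcond : n % 4 = 1)
    (d : ℕ) (hd : d = (3 ^ (n + 1) - 1) / 8 + (3 ^ n - 1) / 2) :
    ∀ a b : GaloisField 3 n,
      {x : GaloisField 3 n | (x + a) ^ d + x ^ d = b}.ncard ≤ 4 := by
  have := Fintype.ofFinite (GaloisField 3 n)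
  have hq : 3 ^ n % 16 = 3 := by
    obtain ⟨m, rfl⟩ : ∃ m, n = 4 * m + 1 := ⟨n / 4, by omega⟩
    rw [pow_succ, pow_mul, Nat.mul_mod, Nat.pow_mod]
    norm_num
  have hcard : Fintype.card (GaloisField 3 n) = 3 ^ n := by
    rw [← Nat.card_eq_fintype_card, GaloisField.card 3 n hn.ne']
  rw [pow_succ] at hd
  generalize 3 ^ n = q at hq hcard hd
  have hmod : 4 * d ≡ (q - 1) / 2 + 1 [MOD 2 * ((q - 1) / 2)] := by
    rw [show 4 * d = (q - 1) / 2 + 1 + 2 * ((q - 1) / 2) * 3 by omega]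
    exact Nat.add_mul_mod_self_left _ _ _
  exact ncard_setOf_apply_add_add_apply_eq_le_four
    (FiniteField.isSquare_neg_one_iff.not.mpr (by omega))
    (Even.isSquare_pow (Nat.even_iff.mpr (by omega)))
    (exists_sq_eq_one_and_eq_mul_pow_pow_four (by omega) hmod (by omega))
end

section
/- Let n be an odd positive integer and let d = (3^n + 1)/4 + (3^n - 1)/2. Then the power function F(x) = x^d on GF(3^n) has (-1)-differential uniformity at most 4; that is, for all a, b ∈ GF(3^n), the number of x ∈ GF(3^n) satisfying (x+a)^d + x^d = b is at most 4. -/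
/-!
Write `v = x ^ d` and `u = (x + a) ^ d`, so that `u + v = b`. Since `4 d ≡ 2 (mod 3 ^ n - 1)` we
have `v ^ 4 = x ^ 2`, hence `x = ± v ^ 2` and likewise `x + a = ± u ^ 2`. In characteristic `3`
the four sign patterns turn the equation into a linear equation for `v` (patterns `++`, `--`,
each with at most one solution) or into a quadratic equation for `x` (patterns `+-`, `-+`, each
with at most two solutions). As `-1` is a nonsquare and `d` is even, the patterns `+-` and `-+`
cannot both occur when `a ≠ 0`, which leaves at most `1 + 1 + 2` solutions.
-/

open Set

lemma Set.ncard_le_two_of_subset_pair {α : Type*} {s : Set α} {x y : α} (h : s ⊆ {x, y}) :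
    s.ncard ≤ 2 :=
  (ncard_le_ncard h (toFinite _)).trans <| (ncard_insert_le _ _).trans (by simp)

lemma eq_zero_of_sq_add_sq_eq_zero_s8 {F : Type*} [Field F] (hF : ¬IsSquare (-1 : F)) {x y : F}
    (h : x ^ 2 + y ^ 2 = 0) : y = 0 := by
  by_contra hy
  exact hF ⟨x / y, by field_simp; linear_combination -h⟩

lemma isSquare_sub_pow_of_add_pow_add_pow_eq {R : Type*} [CommRing R] {d : ℕ} (hd : Even d)
    {a b x : R} (hx : (x + a) ^ d + x ^ d = b) : IsSquare (b - x ^ d) := by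
  rw [← hx, add_sub_cancel_right]
  exact hd.isSquare_pow _

section Domain

variable {R : Type*} [CommRing R] [IsDomain R]

lemma ncard_setOf_quadratic_le_two (p q : R) : {x : R | x ^ 2 + p * x + q = 0}.ncard ≤ 2 := by
  rcases eq_empty_or_nonempty {x : R | x ^ 2 + p * x + q = 0} with
    h | ⟨x₀, hx₀ : x₀ ^ 2 + p * x₀ + q = 0⟩
  · simp [h]
  refine ncard_le_two_of_subset_pair (x := x₀) (y := -p - x₀)
    fun x (hx : x ^ 2 + p * x + q = 0) => ?_
  have : (x - x₀) * (x - (-p - x₀)) = 0 := by linear_combination hx - hx₀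
  rcases mul_eq_zero.mp this with h | h
  · exact .inl (by linear_combination h)
  · exact .inr <| mem_singleton_iff.mpr (by linear_combination h)

lemma ncard_setOf_pow_eq_le_two {d : ℕ} (hA : ∀ x : R, (x ^ d) ^ 4 = x ^ 2) (c : R) :
    {x : R | x ^ d = c}.ncard ≤ 2 := by
  rcases eq_empty_or_nonempty {x : R | x ^ d = c} with h | ⟨x₀, hx₀⟩
  · simp [h]
  refine ncard_le_two_of_subset_pair (x := x₀) (y := -x₀) fun x (hx : x ^ d = c) => ?_
  have : x ^ 2 = x₀ ^ 2 := by rw [← hA, ← hA x₀, hx, hx₀]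
  exact sq_eq_sq_iff_eq_or_eq_neg.mp this

lemma ncard_setOf_mul_pow_eq_le_one [Finite R] {d : ℕ} {b c : R} (hbc : b = 0 → c ≠ 0)
    (f : R → R) : {x : R | b * x ^ d = c ∧ x = f (x ^ d)}.ncard ≤ 1 := by
  refine ncard_le_one_iff_subsingleton.mpr ?_
  rintro x ⟨hx, hfx⟩ y ⟨hy, hfy⟩
  have hb : b ≠ 0 := fun hb => hbc hb (by rw [← hx, hb, zero_mul])
  rw [hfx, hfy, mul_left_cancel₀ hb (hx.trans hy.symm)]

end Domain

section CharThree

variable {F : Type*} [Field F] [CharP F 3]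

lemma add_pow_add_pow_eq_cases {d : ℕ} (hA : ∀ x : F, (x ^ d) ^ 4 = x ^ 2) {a b x : F}
    (hx : (x + a) ^ d + x ^ d = b) :
    (b * x ^ d = a - b ^ 2 ∧ x = (x ^ d) ^ 2) ∨
    (b * x ^ d = -a - b ^ 2 ∧ x = -(x ^ d) ^ 2) ∨
    ((x ^ d) ^ 2 = b ^ 2 + b * x ^ d + a ∧ x = (x ^ d) ^ 2) ∨
    ((x ^ d) ^ 2 = b ^ 2 + b * x ^ d - a ∧ x = -(x ^ d) ^ 2) := by
  have h3 : (3 : F) = 0 := CharP.ofNat_eq_zero F 3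
  have hsign (y : F) : y = (y ^ d) ^ 2 ∨ y = -(y ^ d) ^ 2 :=
    sq_eq_sq_iff_eq_or_eq_neg.mp (by rw [← pow_mul, ← hA, ← pow_mul])
  have hu : (x + a) ^ d = b - x ^ d := by linear_combination hx
  rcases hsign x with hv | hv <;> rcases hsign (x + a) with hw | hw <;> rw [hu] at hw
  · exact .inl ⟨by linear_combination hv - hw + b * x ^ d * h3, hv⟩
  · exact .inr <| .inr <| .inl
      ⟨by linear_combination hv - hw + ((x ^ d) ^ 2 - b * x ^ d) * h3, hv⟩
  · exact .inr <| .inr <| .inr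
      ⟨by linear_combination hw - hv + ((x ^ d) ^ 2 - b * x ^ d) * h3, hv⟩
  · exact .inr <| .inl ⟨by linear_combination hw - hv + b * x ^ d * h3, hv⟩

lemma ncard_setOf_sq_pow_eq_add_le_two [Finite F] (d : ℕ) (a b : F) :
    {x : F | (x ^ d) ^ 2 = b ^ 2 + b * x ^ d + a ∧ x = (x ^ d) ^ 2}.ncard ≤ 2 := by
  have h3 : (3 : F) = 0 := CharP.ofNat_eq_zero F 3
  refine (ncard_le_ncard (fun x hx => ?_) (toFinite _)).trans
    (ncard_setOf_quadratic_le_two a ((b ^ 2 + a) ^ 2))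
  obtain ⟨h, hx⟩ := hx
  show x ^ 2 + a * x + (b ^ 2 + a) ^ 2 = 0
  have hbv : b * x ^ d = x - (b ^ 2 + a) := by linear_combination -h - hx
  linear_combination -(x - (b ^ 2 + a) + b * x ^ d) * hbv - b ^ 2 * hx + (a * x + b ^ 2 * x) * h3

lemma ncard_setOf_sq_pow_eq_sub_le_two [Finite F] (d : ℕ) (a b : F) :
    {x : F | (x ^ d) ^ 2 = b ^ 2 + b * x ^ d - a ∧ x = -(x ^ d) ^ 2}.ncard ≤ 2 := by
  have h3 : (3 : F) = 0 := CharP.ofNat_eq_zero F 3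
  refine (ncard_le_ncard (fun x hx => ?_) (toFinite _)).trans
    (ncard_setOf_quadratic_le_two a ((b ^ 2 - a) ^ 2))
  obtain ⟨h, hx⟩ := hx
  show x ^ 2 + a * x + (b ^ 2 - a) ^ 2 = 0
  have hbv : b * x ^ d = -x - b ^ 2 + a := by linear_combination -h + hx
  linear_combination -(b * x ^ d - x - (b ^ 2 - a)) * hbv + b ^ 2 * hx + (a * x - b ^ 2 * x) * h3

lemma eq_zero_of_isSquare_of_sq_eq (hF : ¬IsSquare (-1 : F)) {a b v w : F}
    (hv : IsSquare v) (hbv : IsSquare (b - v)) (hw : IsSquare w) (hbw : IsSquare (b - w))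
    (hv2 : v ^ 2 = b ^ 2 + b * v + a) (hw2 : w ^ 2 = b ^ 2 + b * w - a) : a = 0 := by
  have h3 : (3 : F) = 0 := CharP.ofNat_eq_zero F 3
  obtain ⟨α, rfl⟩ := hv
  obtain ⟨β, hβ⟩ := hbv
  have hb : b = α * α + β * β := by linear_combination hβ
  -- with `b = α² + β²`, adding the two relations gives a product of two sums of two squares
  have vanish (γ : F) (hγ : (γ * γ) ^ 2 = b ^ 2 + b * (γ * γ) - a) : γ = 0 := by
    have key : ((α + β) ^ 2 + γ ^ 2) * ((α - β) ^ 2 + γ ^ 2) = 0 := by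
      subst hb
      linear_combination hv2 + hγ +
        (γ ^ 2 * (α ^ 2 + β ^ 2) + α ^ 4 + α ^ 2 * β ^ 2 + β ^ 4) * h3
    rcases mul_eq_zero.mp key with h | h
    · exact eq_zero_of_sq_add_sq_eq_zero_s8 hF h
    · exact eq_zero_of_sq_add_sq_eq_zero_s8 hF h
  obtain ⟨γ, rfl⟩ := hw
  obtain ⟨δ, hδ⟩ := hbw
  have hγ0 : γ = 0 := vanish γ hw2
  have hδ0 : δ = 0 := vanish δ (by rw [← hδ]; linear_combination hw2)
  subst hγ0 hδ0
  linear_combination hw2 + b * hδ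

lemma eq_zero_of_add_pow_add_pow_eq_of_sq_pow_eq (hF : ¬IsSquare (-1 : F)) {d : ℕ} (hd : Even d)
    {a b x y : F} (hx : (x + a) ^ d + x ^ d = b) (hx' : (x ^ d) ^ 2 = b ^ 2 + b * x ^ d + a)
    (hy : (y + a) ^ d + y ^ d = b) (hy' : (y ^ d) ^ 2 = b ^ 2 + b * y ^ d - a) : a = 0 :=
  eq_zero_of_isSquare_of_sq_eq hF (hd.isSquare_pow x) (isSquare_sub_pow_of_add_pow_add_pow_eq hd hx)
    (hd.isSquare_pow y) (isSquare_sub_pow_of_add_pow_add_pow_eq hd hy) hx' hy'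

theorem ncard_setOf_add_pow_add_pow_eq_le_four [Finite F] (hF : ¬IsSquare (-1 : F)) {d : ℕ}
    (hd : Even d) (hA : ∀ x : F, (x ^ d) ^ 4 = x ^ 2) (a b : F) :
    {x : F | (x + a) ^ d + x ^ d = b}.ncard ≤ 4 := by
  have h3 : (3 : F) = 0 := CharP.ofNat_eq_zero F 3
  rcases eq_or_ne a 0 with rfl | ha
  · refine (ncard_le_ncard (fun x (hx : (x + 0) ^ d + x ^ d = b) => ?_) (toFinite _)).trans
      ((ncard_setOf_pow_eq_le_two hA (-b)).trans (by norm_num))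
    show x ^ d = -b
    linear_combination -hx + x ^ d * h3
  set S := {x : F | (x + a) ^ d + x ^ d = b}
  set B₁ := {x : F | b * x ^ d = a - b ^ 2 ∧ x = (x ^ d) ^ 2}
  set B₂ := {x : F | b * x ^ d = -a - b ^ 2 ∧ x = -(x ^ d) ^ 2}
  set B₃ := {x : F | (x ^ d) ^ 2 = b ^ 2 + b * x ^ d + a ∧ x = (x ^ d) ^ 2}
  set B₄ := {x : F | (x ^ d) ^ 2 = b ^ 2 + b * x ^ d - a ∧ x = -(x ^ d) ^ 2}
  have hB₁₂ : (B₁ ∪ B₂).ncard ≤ 2 := (ncard_union_le _ _).trans <| add_le_add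
    (ncard_setOf_mul_pow_eq_le_one (fun hb => by simpa [hb] using ha) (fun v => v ^ 2))
    (ncard_setOf_mul_pow_eq_le_one (fun hb => by simpa [hb] using ha) (fun v => -v ^ 2))
  have hS : S ⊆ B₁ ∪ B₂ ∪ B₃ ∨ S ⊆ B₁ ∪ B₂ ∪ B₄ := by
    by_cases h₃ : ∃ x₀ ∈ S, x₀ ∈ B₃
    · obtain ⟨x₀, hx₀, h₀, -⟩ := h₃
      refine .inl fun x hx => ?_
      rcases add_pow_add_pow_eq_cases hA hx with h | h | h | h
      · exact .inl (.inl h)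
      · exact .inl (.inr h)
      · exact .inr h
      · exact absurd (eq_zero_of_add_pow_add_pow_eq_of_sq_pow_eq hF hd hx₀ h₀ hx h.1) ha
    · refine .inr fun x hx => ?_
      rcases add_pow_add_pow_eq_cases hA hx with h | h | h | h
      · exact .inl (.inl h)
      · exact .inl (.inr h)
      · exact absurd ⟨x, hx, h⟩ h₃
      · exact .inr h
  rcases hS with hS | hS <;> refine (ncard_le_ncard hS (toFinite _)).trans <|
    (ncard_union_le _ _).trans ?_
  · linarith [ncard_setOf_sq_pow_eq_add_le_two d a b]
  · linarith [ncard_setOf_sq_pow_eq_sub_le_two d a b]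

end CharThree

lemma FiniteField.pow_pow_four_eq_sq {K : Type*} [Field K] [Fintype K] {d : ℕ}
    (hd : 4 * d + 1 = 3 * Fintype.card K) (x : K) : (x ^ d) ^ 4 = x ^ 2 := by
  rcases eq_or_ne x 0 with rfl | hx
  · have : d ≠ 0 := by have := Fintype.one_lt_card (α := K); omega
    simp [this]
  refine mul_right_cancel₀ hx ?_
  calc (x ^ d) ^ 4 * x = (x ^ Fintype.card K) ^ 3 := by
        rw [← pow_mul, ← pow_succ, ← pow_mul]
        congr 1
        omega
    _ = x ^ 2 * x := by rw [FiniteField.pow_card]; ring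

lemma three_pow_mod_eight_of_odd {n : ℕ} (hn : Odd n) : 3 ^ n % 8 = 3 := by
  obtain ⟨k, rfl⟩ := hn
  rw [pow_succ, pow_mul, Nat.mul_mod, Nat.pow_mod]
  norm_num

theorem stmt_8_general (n : ℕ) (hcond : Odd n)
    (d : ℕ) (hd : d = (3 ^ n + 1) / 4 + (3 ^ n - 1) / 2) :
    ∀ a b : GaloisField 3 n,
      {x : GaloisField 3 n | (x + a) ^ d + x ^ d = b}.ncard ≤ 4 := by
  let := Fintype.ofFinite (GaloisField 3 n)
  have hcard : Fintype.card (GaloisField 3 n) = 3 ^ n := by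
    rw [← Nat.card_eq_fintype_card, GaloisField.card 3 n hcond.pos.ne']
  have h8 := three_pow_mod_eight_of_odd hcond
  refine ncard_setOf_add_pow_add_pow_eq_le_four ?_ (Nat.even_iff.mpr ?_)
    (FiniteField.pow_pow_four_eq_sq ?_)
  · rw [FiniteField.isSquare_neg_one_iff, hcard]
    omega
  · omega
  · rw [hcard]
    omega

theorem stmt_8 (n : ℕ) (hn : 0 < n) (hcond : Odd n)
    (d : ℕ) (hd : d = (3 ^ n + 1) / 4 + (3 ^ n - 1) / 2) :
    ∀ a b : GaloisField 3 n,
      {x : GaloisField 3 n | (x + a) ^ d + x ^ d = b}.ncard ≤ 4 :=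
  stmt_8_general n hcond d hd
end

section
/- Let n be a positive integer with n ≡ 1 (mod 4) and let d = (3^((n+1)/2) - 1)/2. Then gcd(d, 3^n - 1) = 1, and consequently the map x ↦ x^d is a bijection (permutation) of GF(3^n). -/
theorem pow_bijective_of_coprime_card_sub_one {G₀ : Type*} [GroupWithZero G₀] [Finite G₀]
    {d : ℕ} (hd : d ≠ 0) (hcop : (Nat.card G₀ - 1).Coprime d) :
    Function.Bijective (fun x : G₀ => x ^ d) := by
  have hunits : Function.Injective (fun u : G₀ˣ => u ^ d) :=
    (Nat.Coprime.pow_left_bijective (by rwa [Nat.card_units])).injective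
  refine Finite.injective_iff_bijective.mp fun x y hxy => ?_
  rcases eq_or_ne x 0 with rfl | hx
  · exact ((pow_eq_zero_iff hd).mp (hxy.symm.trans (zero_pow hd))).symm
  rcases eq_or_ne y 0 with rfl | hy
  · exact (pow_eq_zero_iff hd).mp (hxy.trans (zero_pow hd))
  have := @hunits (Units.mk0 x hx) (Units.mk0 y hy) (Units.ext (by simpa using hxy))
  simpa using congrArg Units.val this

theorem three_pow_mod_four_of_odd {k : ℕ} (hk : Odd k) : 3 ^ k % 4 = 3 := by
  obtain ⟨m, rfl⟩ := hk
  rw [pow_succ, pow_mul, Nat.mul_mod, Nat.pow_mod]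
  norm_num

theorem odd_three_pow_sub_one_div_two {k : ℕ} (hk : Odd k) : Odd ((3 ^ k - 1) / 2) := by
  have := three_pow_mod_four_of_odd hk
  rw [Nat.odd_iff]
  generalize 3 ^ k = x at *
  omega

theorem coprime_three_pow_sub_one_div_two {k n : ℕ} (hk : Odd k) (hkn : k.Coprime n) :
    ((3 ^ k - 1) / 2).Coprime (3 ^ n - 1) := by
  have hdvd : (3 ^ k - 1) / 2 ∣ 3 ^ k - 1 := Nat.div_dvd_of_dvd (by
    have := three_pow_mod_four_of_odd hk
    generalize 3 ^ k = x at *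
    omega)
  have hgcd_dvd_two : Nat.gcd ((3 ^ k - 1) / 2) (3 ^ n - 1) ∣ 2 := by
    have := Nat.gcd_dvd_gcd_of_dvd_left (3 ^ n - 1) hdvd
    rwa [Nat.pow_sub_one_gcd_pow_sub_one, hkn] at this
  exact Nat.eq_one_of_dvd_coprimes (odd_three_pow_sub_one_div_two hk).coprime_two_right
    (Nat.gcd_dvd_left _ _) hgcd_dvd_two

theorem coprime_succ_div_two_of_odd {n : ℕ} (hn : Odd n) : ((n + 1) / 2).Coprime n := by
  have hcop : n.Coprime (n + 1) := by simp
  rw [show n + 1 = 2 * ((n + 1) / 2) by rcases hn with ⟨m, rfl⟩; omega] at hcop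
  exact (Nat.Coprime.coprime_mul_left_right hcop).symm

theorem stmt_10_general (n : ℕ) (hcond : n % 4 = 1)
    (d : ℕ) (hd : d = (3 ^ ((n + 1) / 2) - 1) / 2) :
    Nat.gcd d (3 ^ n - 1) = 1 ∧
      Function.Bijective (fun x : GaloisField 3 n => x ^ d) := by
  have hk : Odd ((n + 1) / 2) := ⟨n / 4, by omega⟩
  have hkn : ((n + 1) / 2).Coprime n := coprime_succ_div_two_of_odd ⟨n / 2, by omega⟩
  have hcop : d.Coprime (3 ^ n - 1) := hd ▸ coprime_three_pow_sub_one_div_two hk hkn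
  refine ⟨hcop, pow_bijective_of_coprime_card_sub_one ?_ ?_⟩
  · exact hd ▸ (odd_three_pow_sub_one_div_two hk).pos.ne'
  · rw [GaloisField.card 3 n (by omega)]
    exact hcop.symm

theorem stmt_10 (n : ℕ) (hn : 0 < n) (hcond : n % 4 = 1)
    (d : ℕ) (hd : d = (3 ^ ((n + 1) / 2) - 1) / 2) :
    Nat.gcd d (3 ^ n - 1) = 1 ∧
      Function.Bijective (fun x : GaloisField 3 n => x ^ d) :=
  stmt_10_general n hcond d hd
end

section
/- Let n be a positive integer with n ≡ 1 (mod 4) and let d = (3^(n+1) - 1)/8. Then gcd(d, 3^n - 1) = 1, and consequently the map x ↦ x^d is a bijection (permutation) of GF(3^n). -/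
theorem pow_left_injective_of_coprime {G₀ : Type*} [GroupWithZero G₀] {d : ℕ} (hd : d ≠ 0)
    (hcop : (Nat.card G₀ˣ).Coprime d) : Function.Injective fun x : G₀ => x ^ d := by
  intro x y hxy
  simp only at hxy
  rcases eq_or_ne x 0 with rfl | hx
  · exact ((pow_eq_zero_iff hd).1 (hxy ▸ zero_pow hd)).symm
  rcases eq_or_ne y 0 with rfl | hy
  · exact (pow_eq_zero_iff hd).1 (hxy.symm ▸ zero_pow hd)
  have hunits : Units.mk0 x hx ^ d = Units.mk0 y hy ^ d := Units.ext (by simpa using hxy)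
  exact congrArg Units.val (hcop.pow_left_bijective.injective hunits)

theorem pow_left_bijective_of_coprime {G₀ : Type*} [GroupWithZero G₀] [Finite G₀] {d : ℕ}
    (hd : d ≠ 0) (hcop : (Nat.card G₀ˣ).Coprime d) : Function.Bijective fun x : G₀ => x ^ d :=
  Finite.injective_iff_bijective.1 (pow_left_injective_of_coprime hd hcop)

-- Any common divisor of `d` and `m` divides `8 * d - 3 * m = 2`, and `d` is odd.
theorem coprime_of_eight_mul_eq_three_mul_add_two {d m : ℕ} (hd : Odd d)
    (h : 8 * d = 3 * m + 2) : Nat.Coprime d m := by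
  have hdvd_two : Nat.gcd d m ∣ 2 :=
    (Nat.dvd_add_right ((Nat.gcd_dvd_right d m).mul_left 3)).1
      (h ▸ (Nat.gcd_dvd_left d m).mul_left 8)
  have hdvd_one : Nat.gcd d m ∣ Nat.gcd 2 d :=
    Nat.dvd_gcd hdvd_two (Nat.gcd_dvd_left d m)
  rwa [Nat.coprime_two_left.2 hd, Nat.dvd_one] at hdvd_one

theorem three_pow_succ_mod_sixteen {n : ℕ} (hn : n % 4 = 1) : 3 ^ (n + 1) % 16 = 9 := by
  obtain ⟨k, rfl⟩ : ∃ k, n = 4 * k + 1 := ⟨n / 4, by omega⟩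
  rw [show 4 * k + 1 + 1 = 4 * k + 2 by ring, pow_add, pow_mul, Nat.mul_mod, Nat.pow_mod]
  norm_num

theorem stmt_11_general (n : ℕ) (hcond : n % 4 = 1)
    (d : ℕ) (hd : d = (3 ^ (n + 1) - 1) / 8) :
    Nat.gcd d (3 ^ n - 1) = 1 ∧
      Function.Bijective (fun x : GaloisField 3 n => x ^ d) := by
  -- `3 ^ (n + 1) ≡ 9 [MOD 16]` gives `8 * d ≡ 8 [MOD 16]`, so `d` is odd.
  have h16 := three_pow_succ_mod_sixteen hcond
  have hsucc : 3 ^ (n + 1) = 3 * 3 ^ n := pow_succ' 3 n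
  have hpos : 1 ≤ 3 ^ n := Nat.one_le_pow _ _ (by norm_num)
  have hcop : Nat.Coprime d (3 ^ n - 1) :=
    coprime_of_eight_mul_eq_three_mul_add_two (Nat.odd_iff.2 (by omega)) (by omega)
  refine ⟨hcop, pow_left_bijective_of_coprime (by omega) ?_⟩
  rw [Nat.card_units, GaloisField.card 3 n (by omega)]
  exact hcop.symm

theorem stmt_11 (n : ℕ) (hn : 0 < n) (hcond : n % 4 = 1)
    (d : ℕ) (hd : d = (3 ^ (n + 1) - 1) / 8) :
    Nat.gcd d (3 ^ n - 1) = 1 ∧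
      Function.Bijective (fun x : GaloisField 3 n => x ^ d) :=
  stmt_11_general n hcond d hd
end
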